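/- Alternating-trace containment implies the trace-based game relation: if s₁ ≤_atc s₂ then s₁ ≤_{∀∀∃∃}^{tb} s₂. -/

import Mathlib

/-!
Fix `fo₁, fd₁, fr₁` on `s₁` and a trace-based input strategy `fi₂` on `s₂`. Alternating-trace
containment answers with `fo₂, fd₂, fr₂` and an input strategy `fi₁` producing the same outcome
as `fi₂`. Since `fi₁` need not be trace-based, replace it by the strategy that, after any path
whose trace is a prefix of that outcome, plays the input the outcome plays next; it produces the
same outcome. The point is that this is a legal strategy: the input must be enabled in every state
`q` reachable by the trace, not only in the one the play visits. To see this, take a path `ρ` to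
`q` and apply alternating-trace containment again, with output and determinization strategies
that follow `ρ` and a race strategy preferring outputs. Because `fi₂` only sees traces, the
answering play of `s₁` is forced along `ρ` to `q` and then has to take the input.
-/

/-- An interface automaton over inputs `In`, outputs `Out`, states `State`. -/
structure IA (In Out State : Type) where
  init : State
  tr : State → (In ⊕ Out) → State → Prop

namespace IA

variable {In Out State State1 State2 State3 : Type}

/-- One-step successor sets. -/
def step (s : IA In Out State) (P : Set State) (ℓ : In ⊕ Out) : Set State :=
  {q' | ∃ q ∈ P, s.tr q ℓ q'}

/-- `s after σ`: states reachable from the initial state via word `σ`. -/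
def after (s : IA In Out State) (σ : List (In ⊕ Out)) : Set State :=
  σ.foldl s.step {s.init}

/-- Traces of `s`. -/
def traces (s : IA In Out State) : Set (List (In ⊕ Out)) :=
  {σ | (s.after σ).Nonempty}

/-- Inputs enabled in *all* states of `P`. -/
def inSet (s : IA In Out State) (P : Set State) : Set In :=
  {a | ∀ q ∈ P, ∃ q', s.tr q (Sum.inl a) q'}

/-- Outputs enabled in *some* state of `P`. -/
def outSet (s : IA In Out State) (P : Set State) : Set Out :=
  {x | ∃ q ∈ P, ∃ q', s.tr q (Sum.inr x) q'}

end IA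

/-- Input-failure traces: a word over `L = In ⊕ Out` possibly followed by a
    final input-failure symbol `ā` (encoded as `some a`). -/
abbrev FTrace (In Out : Type) := List (In ⊕ Out) × Option In

/-- A set of input-failure traces is input-failure closed. -/
def fclosed {In Out : Type} (S : Set (FTrace In Out)) : Prop :=
  ∀ (σ : List (In ⊕ Out)) (a : In) (ρ : FTrace In Out),
    (σ, some a) ∈ S → (σ ++ Sum.inl a :: ρ.1, ρ.2) ∈ S

/-- Input-failure closure. -/
def fcl {In Out : Type} (S : Set (FTrace In Out)) : Set (FTrace In Out) :=
  S ∪ {t | ∃ (σ : List (In ⊕ Out)) (a : In) (ρ : FTrace In Out),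
        (σ, some a) ∈ S ∧ t = (σ ++ Sum.inl a :: ρ.1, ρ.2)}

namespace IA

variable {In Out State State1 State2 State3 : Type}

/-- Input-failure traces of an IA. -/
def Ftraces (s : IA In Out State) : Set (FTrace In Out) :=
  {t | (t.2 = none ∧ t.1 ∈ s.traces) ∨
       (∃ a, t.2 = some a ∧ a ∉ s.inSet (s.after t.1))}

/-- Input-failure refinement. -/
def refIF (s1 : IA In Out State1) (s2 : IA In Out State2) : Prop :=
  s1.Ftraces ⊆ fcl s2.Ftraces

/-- Output-existential words of `s`. -/
def OE (s : IA In Out State) : Set (List (In ⊕ Out)) :=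
  {σ | ∀ ρ x τ, σ = ρ ++ Sum.inr x :: τ → x ∈ s.outSet (s.after ρ)}

/-- Input-universal words of `s`. -/
def IU (s : IA In Out State) : Set (List (In ⊕ Out)) :=
  {σ | ∀ ρ a τ, σ = ρ ++ Sum.inl a :: τ → a ∈ s.inSet (s.after ρ)}

/-- Input-universal / output-existential refinement. -/
def refIUOE (s1 : IA In Out State1) (s2 : IA In Out State2) : Prop :=
  s1.OE ∩ s2.IU ⊆ s1.IU ∩ s2.OE

/-- Utraces: traces where every occurring input is enabled in all states
    reached by the preceding prefix. -/
def Utraces (s : IA In Out State) : Set (List (In ⊕ Out)) :=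
  {σ | σ ∈ s.traces ∧
       ∀ ρ a, (ρ ++ [Sum.inl a]) <+: σ → a ∈ s.inSet (s.after ρ)}

/-- `Δ`: add a `δ`-selfloop (a fresh output) to each quiescent state. -/
def delta (s : IA In Out State) : IA In (Out ⊕ Unit) State where
  init := s.init
  tr := fun q ℓ q' =>
    match ℓ with
    | Sum.inl a => s.tr q (Sum.inl a) q'
    | Sum.inr (Sum.inl x) => s.tr q (Sum.inr x) q'
    | Sum.inr (Sum.inr _) => q' = q ∧ ∀ x q'', ¬ s.tr q (Sum.inr x) q''

/-- `i uioco s`. -/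
def uioco (i : IA In Out State1) (s : IA In Out State2) : Prop :=
  ∀ σ ∈ (delta s).Utraces,
    (delta i).outSet ((delta i).after σ) ⊆ (delta s).outSet ((delta s).after σ) ∧
    (delta s).inSet ((delta s).after σ) ⊆ (delta i).inSet ((delta i).after σ)

/-! ### Game framework -/

/-- A (finite) path: a list of (label, target-state) steps from the initial state. -/
abbrev Path (In Out State : Type) := List ((In ⊕ Out) × State)

/-- The state reached just before step `n` of `π` (the initial state for `n = 0`). -/
def stateAt (s : IA In Out State) (π : Path In Out State) : ℕ → State
  | 0 => s.init
  | Nat.succ m => ((π[m]?).map Prod.snd).getD s.init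

/-- The final state of a path. -/
def lastState (s : IA In Out State) (π : Path In Out State) : State :=
  stateAt s π π.length

/-- Validity of a path. -/
def IsPath (s : IA In Out State) (π : Path In Out State) : Prop :=
  ∀ n p, π[n]? = some p → s.tr (stateAt s π n) p.1 p.2

/-- Output strategies. -/
structure OutStrat (s : IA In Out State) where
  f : Path In Out State → Option Out
  valid : ∀ π x, IsPath s π → f π = some x →
    ∃ q', s.tr (lastState s π) (Sum.inr x) q'

/-- Input strategies. -/
structure InStrat (s : IA In Out State) where
  f : Path In Out State → Option In
  valid : ∀ π a, IsPath s π → f π = some a →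
    ∃ q', s.tr (lastState s π) (Sum.inl a) q'

/-- Determinization strategies. -/
structure DetStrat (s : IA In Out State) where
  f : Path In Out State → (In ⊕ Out) → Option State
  total : ∀ π ℓ, IsPath s π → (∃ q', s.tr (lastState s π) ℓ q') → (f π ℓ).isSome
  valid : ∀ π ℓ q', IsPath s π → f π ℓ = some q' → s.tr (lastState s π) ℓ q'

/-- Race-condition strategies: `false` = prefer input, `true` = prefer output. -/
abbrev RaceStrat (In Out State : Type) := Path In Out State → Bool

/-- An input strategy is trace-based if it depends only on the trace of the path. -/
def TraceBased (s : IA In Out State) (fi : InStrat s) : Prop :=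
  ∀ π π', IsPath s π → IsPath s π' →
    π.map Prod.fst = π'.map Prod.fst → fi.f π = fi.f π'

/-- Extend a path by label `ℓ` using the determinization strategy. -/
def push (s : IA In Out State) (fd : DetStrat s) (π : Path In Out State)
    (ℓ : In ⊕ Out) : Path In Out State :=
  match fd.f π ℓ with
  | some q => π ++ [(ℓ, q)]
  | none => π

/-- One step of the strategy-driven execution. -/
def gstep (s : IA In Out State) (fi : InStrat s) (fo : OutStrat s)
    (fd : DetStrat s) (fr : RaceStrat In Out State)
    (π : Path In Out State) : Path In Out State :=
  match fi.f π, fo.f π with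
  | some a, none => push s fd π (Sum.inl a)
  | none, some x => push s fd π (Sum.inr x)
  | some a, some x => if fr π then push s fd π (Sum.inr x) else push s fd π (Sum.inl a)
  | none, none => π

/-- The `n`-th label of the (finite or infinite) outcome of the four strategies. -/
def outcomeTrace (s : IA In Out State) (fi : InStrat s) (fo : OutStrat s)
    (fd : DetStrat s) (fr : RaceStrat In Out State) (n : ℕ) : Option (In ⊕ Out) :=
  (((gstep s fi fo fd fr)^[n + 1] ([] : Path In Out State))[n]?).map Prod.fst

/-- Alternating-trace containment for IA. -/
def refATC (s1 : IA In Out State1) (s2 : IA In Out State2) : Prop :=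
  ∀ (fo1 : OutStrat s1) (fd1 : DetStrat s1) (fr1 : RaceStrat In Out State1),
  ∃ (fo2 : OutStrat s2) (fd2 : DetStrat s2) (fr2 : RaceStrat In Out State2),
  ∀ (fi2 : InStrat s2), ∃ (fi1 : InStrat s1),
    ∀ n, outcomeTrace s1 fi1 fo1 fd1 fr1 n = outcomeTrace s2 fi2 fo2 fd2 fr2 n

/-- The reordered, trace-based game relation `≤_{∀∀∃∃}^{tb}`. -/
def refAAEEtb (s1 : IA In Out State1) (s2 : IA In Out State2) : Prop :=
  ∀ (fi2 : InStrat s2), TraceBased s2 fi2 →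
  ∀ (fo1 : OutStrat s1) (fd1 : DetStrat s1) (fr1 : RaceStrat In Out State1),
  ∃ (fi1 : InStrat s1), TraceBased s1 fi1 ∧
  ∃ (fo2 : OutStrat s2) (fd2 : DetStrat s2) (fr2 : RaceStrat In Out State2),
    ∀ n, outcomeTrace s1 fi1 fo1 fd1 fr1 n = outcomeTrace s2 fi2 fo2 fd2 fr2 n

/-- Alternating simulation. -/
def IsAltSim (s1 : IA In Out State1) (s2 : IA In Out State2)
    (R : State1 → State2 → Prop) : Prop :=
  ∀ q1 q2, R q1 q2 →
    (s1.outSet {q1} ⊆ s2.outSet {q2}) ∧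
    (s2.inSet {q2} ⊆ s1.inSet {q1}) ∧
    (∀ a q1', a ∈ s2.inSet {q2} → s1.tr q1 (Sum.inl a) q1' →
       ∃ q2', s2.tr q2 (Sum.inl a) q2' ∧ R q1' q2') ∧
    (∀ x q1', s1.tr q1 (Sum.inr x) q1' →
       ∃ q2', s2.tr q2 (Sum.inr x) q2' ∧ R q1' q2')

/-- Greatest alternating simulation relates the initial states. -/
def refAS (s1 : IA In Out State1) (s2 : IA In Out State2) : Prop :=
  ∃ R, IsAltSim s1 s2 R ∧ R s1.init s2.init

/-- Image finiteness. -/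
def ImageFinite (s : IA In Out State) : Prop :=
  ∀ q ℓ, {q' | s.tr q ℓ q'}.Finite

/-- Input-universal determinization (subset construction restricted to
    universally enabled inputs and existentially enabled outputs). -/
def detIU (s : IA In Out State) : IA In Out (Set State) where
  init := {s.init}
  tr := fun P ℓ P' => P.Nonempty ∧
    (match ℓ with
     | Sum.inl a => a ∈ s.inSet P
     | Sum.inr x => x ∈ s.outSet P) ∧
    P' = s.step P ℓ

end IA

namespace IA

variable {In Out State State1 State2 : Type} {s : IA In Out State}

theorem after_append_singleton (σ : List (In ⊕ Out)) (ℓ : In ⊕ Out) :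
    s.after (σ ++ [ℓ]) = s.step (s.after σ) ℓ := by
  simp only [after, List.foldl_append, List.foldl_cons, List.foldl_nil]

theorem stateAt_append_of_le {π : Path In Out State} (ρ : Path In Out State) {n : ℕ}
    (h : n ≤ π.length) : stateAt s (π ++ ρ) n = stateAt s π n := by
  cases n with
  | zero => rfl
  | succ m => simp only [stateAt, List.getElem?_append_left (by omega : m < π.length)]

theorem lastState_append_singleton (π : Path In Out State) (e : (In ⊕ Out) × State) :
    lastState s (π ++ [e]) = e.2 := by
  simp [lastState, stateAt]

theorem lastState_of_prefix {π ρ : Path In Out State} (h : π <+: ρ) :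
    lastState s π = stateAt s ρ π.length := by
  obtain ⟨t, rfl⟩ := h
  exact (stateAt_append_of_le t le_rfl).symm

theorem IsPath.nil : IsPath s [] := by
  simp [IsPath]

theorem IsPath.of_prefix {π ρ : Path In Out State} (hρ : IsPath s ρ) (h : π <+: ρ) :
    IsPath s π := by
  obtain ⟨t, rfl⟩ := h
  intro n p hp
  have hn : n < π.length := (List.getElem?_eq_some_iff.1 hp).1
  rw [← stateAt_append_of_le t hn.le]
  exact hρ n p (by rwa [List.getElem?_append_left hn])

theorem IsPath.tr_lastState_of_prefix {π ρ : Path In Out State} (hρ : IsPath s ρ)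
    (h : π <+: ρ) {p : (In ⊕ Out) × State} (hp : ρ[π.length]? = some p) :
    s.tr (lastState s π) p.1 p.2 := by
  rw [lastState_of_prefix h]
  exact hρ _ _ hp

theorem IsPath.append_singleton {π : Path In Out State} {ℓ : In ⊕ Out} {q : State}
    (hπ : IsPath s π) (htr : s.tr (lastState s π) ℓ q) : IsPath s (π ++ [(ℓ, q)]) := by
  intro n p hp
  rcases Nat.lt_or_ge n π.length with hn | hn
  · rw [List.getElem?_append_left hn] at hp
    rw [stateAt_append_of_le _ hn.le]
    exact hπ n p hp
  · obtain rfl : n = π.length := by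
      have := (List.getElem?_eq_some_iff.1 hp).1
      simp only [List.length_append, List.length_singleton] at this
      omega
    rw [List.getElem?_concat_length] at hp
    cases hp
    rwa [stateAt_append_of_le _ le_rfl]

theorem IsPath.lastState_mem_after {π : Path In Out State} (hπ : IsPath s π) :
    lastState s π ∈ s.after (π.map Prod.fst) := by
  induction π using List.reverseRecOn with
  | nil => exact Set.mem_singleton _
  | append_singleton π e ih =>
    rw [List.map_append, List.map_singleton, after_append_singleton,
      lastState_append_singleton]
    exact ⟨lastState s π, ih (hπ.of_prefix (List.prefix_append _ _)),
      hπ.tr_lastState_of_prefix (List.prefix_append _ _) List.getElem?_concat_length⟩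

theorem exists_isPath_of_mem_after {σ : List (In ⊕ Out)} {q : State} (h : q ∈ s.after σ) :
    ∃ π : Path In Out State, IsPath s π ∧ π.map Prod.fst = σ ∧ lastState s π = q := by
  induction σ using List.reverseRecOn generalizing q with
  | nil => exact ⟨[], IsPath.nil, rfl, h.symm⟩
  | append_singleton σ ℓ ih =>
    rw [after_append_singleton] at h
    obtain ⟨p, hp, htr⟩ := h
    obtain ⟨π, hπ, rfl, rfl⟩ := ih hp
    exact ⟨π ++ [(ℓ, q)], hπ.append_singleton htr, by simp, lastState_append_singleton _ _⟩

section Chosen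

variable {fi fi' : InStrat s} {fo : OutStrat s} {fd : DetStrat s}
  {fr : RaceStrat In Out State} {π : Path In Out State} {a : In} {x : Out}

def chosenLabel (fi : InStrat s) (fo : OutStrat s) (fr : RaceStrat In Out State)
    (π : Path In Out State) : Option (In ⊕ Out) :=
  match fi.f π, fo.f π with
  | some a, none => some (.inl a)
  | none, some x => some (.inr x)
  | some a, some x => if fr π then some (.inr x) else some (.inl a)
  | none, none => none

theorem gstep_eq_chosenLabel (fi : InStrat s) (fo : OutStrat s) (fd : DetStrat s)
    (fr : RaceStrat In Out State) (π : Path In Out State) :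
    gstep s fi fo fd fr π = ((chosenLabel fi fo fr π).map (push s fd π)).getD π := by
  unfold gstep chosenLabel
  rcases fi.f π with _ | a <;> rcases fo.f π with _ | x <;> try rfl
  by_cases hr : fr π <;> simp [hr]

theorem chosenLabel_of_outStrat_eq_none (h : fo.f π = none) :
    chosenLabel fi fo fr π = (fi.f π).map .inl := by
  unfold chosenLabel
  rcases fi.f π with _ | a <;> simp [h]

theorem chosenLabel_of_race (h : fo.f π = some x) (hr : fr π = true) :
    chosenLabel fi fo fr π = some (.inr x) := by
  unfold chosenLabel
  rcases fi.f π with _ | a <;> simp [h, hr]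

theorem chosenLabel_of_inStrat_eq_some (h : fi.f π = some a) :
    chosenLabel fi fo fr π = some (.inl a) ∨ ∃ x, chosenLabel fi fo fr π = some (.inr x) := by
  unfold chosenLabel
  rcases fo.f π with _ | x
  · simp [h]
  · by_cases hr : fr π <;> simp [h, hr]

theorem inStrat_eq_some_of_chosenLabel (h : chosenLabel fi fo fr π = some (.inl a)) :
    fi.f π = some a := by
  unfold chosenLabel at h
  split at h <;> (try split_ifs at h) <;> simp_all

theorem chosenLabel_congr_inStrat
    (h : fi'.f π = (chosenLabel fi fo fr π).bind Sum.getLeft?) :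
    chosenLabel fi' fo fr π = chosenLabel fi fo fr π := by
  unfold chosenLabel at h ⊢
  rcases hfi : fi.f π with _ | a <;> rcases hfo : fo.f π with _ | x <;>
    (try split_ifs) <;> simp_all

theorem exists_tr_of_chosenLabel (hπ : IsPath s π) {ℓ : In ⊕ Out}
    (h : chosenLabel fi fo fr π = some ℓ) : ∃ q, s.tr (lastState s π) ℓ q := by
  unfold chosenLabel at h
  split at h <;> (try split_ifs at h) <;> cases h
  all_goals first | exact fi.valid _ _ hπ ‹_› | exact fo.valid _ _ hπ ‹_›

end Chosen

section Play

variable {fi : InStrat s} {fo : OutStrat s} {fd : DetStrat s} {fr : RaceStrat In Out State}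
  {π : Path In Out State} {n : ℕ}

variable (fi fo fd fr) in
theorem gstep_eq_or_exists_eq_append (π : Path In Out State) :
    gstep s fi fo fd fr π = π ∨ ∃ e, gstep s fi fo fd fr π = π ++ [e] := by
  rw [gstep_eq_chosenLabel]
  rcases hc : chosenLabel fi fo fr π with _ | ℓ
  · exact .inl rfl
  · rcases hq : fd.f π ℓ with _ | q
    · exact .inl (by simp [push, hq])
    · exact .inr ⟨(ℓ, q), by simp [push, hq]⟩

theorem gstep_of_chosenLabel_eq_some (hπ : IsPath s π) {ℓ : In ⊕ Out}
    (h : chosenLabel fi fo fr π = some ℓ) :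
    ∃ q, s.tr (lastState s π) ℓ q ∧ fd.f π ℓ = some q ∧
      gstep s fi fo fd fr π = π ++ [(ℓ, q)] := by
  obtain ⟨q, hq⟩ :=
    Option.isSome_iff_exists.1 (fd.total π ℓ hπ (exists_tr_of_chosenLabel hπ h))
  refine ⟨q, fd.valid π ℓ q hπ hq, hq, ?_⟩
  simp [gstep_eq_chosenLabel, h, push, hq]

variable (fi fo fd fr) in
def play (n : ℕ) : Path In Out State :=
  (gstep s fi fo fd fr)^[n] []

theorem play_succ (n : ℕ) :
    play fi fo fd fr (n + 1) = gstep s fi fo fd fr (play fi fo fd fr n) :=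
  Function.iterate_succ_apply' _ _ _

theorem outcomeTrace_eq_play (n : ℕ) :
    outcomeTrace s fi fo fd fr n = ((play fi fo fd fr (n + 1))[n]?).map Prod.fst :=
  rfl

theorem isPath_play (n : ℕ) : IsPath s (play fi fo fd fr n) := by
  induction n with
  | zero => exact IsPath.nil
  | succ n ih =>
    rw [play_succ]
    rcases h : chosenLabel fi fo fr (play fi fo fd fr n) with _ | ℓ
    · rwa [gstep_eq_chosenLabel, h]
    · obtain ⟨q, htr, -, hstep⟩ := gstep_of_chosenLabel_eq_some (fd := fd) ih h
      rw [hstep]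
      exact ih.append_singleton htr

variable (fi fo fd fr) in
theorem play_succ_cases (n : ℕ) :
    play fi fo fd fr (n + 1) = play fi fo fd fr n ∨
      (play fi fo fd fr n).length = n ∧
        ∃ e, play fi fo fd fr (n + 1) = play fi fo fd fr n ++ [e] := by
  induction n with
  | zero =>
    rcases gstep_eq_or_exists_eq_append fi fo fd fr [] with h | h
    · exact .inl h
    · exact .inr ⟨rfl, h⟩
  | succ n ih =>
    rcases ih with h | ⟨hlen, e, h⟩
    · left
      rw [play_succ, h, ← play_succ, h]
    · rw [play_succ (n + 1)]
      rcases gstep_eq_or_exists_eq_append fi fo fd fr (play fi fo fd fr (n + 1)) with h' | h'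
      · exact .inl h'
      · exact .inr ⟨by simp [h, hlen], h'⟩

theorem length_play_le (n : ℕ) : (play fi fo fd fr n).length ≤ n := by
  induction n with
  | zero => simp [play]
  | succ n ih =>
    rcases play_succ_cases fi fo fd fr n with h | ⟨hlen, e, h⟩
    · rw [h]; omega
    · simp [h, hlen]

theorem play_eq_take {k n : ℕ} (h : k ≤ n) :
    play fi fo fd fr k = (play fi fo fd fr n).take k := by
  induction n, h using Nat.le_induction with
  | base => exact (List.take_of_length_le (length_play_le k)).symm
  | succ n hkn ih =>
    rcases play_succ_cases fi fo fd fr n with h | ⟨hlen, e, h⟩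
    · rw [h, ih]
    · rw [h, List.take_append_of_le_length (by omega), ih]

theorem play_length_play (n : ℕ) :
    play fi fo fd fr (play fi fo fd fr n).length = play fi fo fd fr n := by
  rw [play_eq_take (length_play_le n), List.take_length]

theorem outcomeTrace_eq_getElem?_play {k n : ℕ} (h : k < n) :
    outcomeTrace s fi fo fd fr k = ((play fi fo fd fr n)[k]?).map Prod.fst := by
  rw [outcomeTrace_eq_play, play_eq_take (Nat.succ_le_of_lt h),
    List.getElem?_take_of_lt k.lt_succ_self]

theorem outcomeTrace_of_play_succ_eq_append {e : (In ⊕ Out) × State}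
    (hlen : (play fi fo fd fr n).length = n)
    (h : play fi fo fd fr (n + 1) = play fi fo fd fr n ++ [e]) :
    outcomeTrace s fi fo fd fr n = some e.1 := by
  rw [outcomeTrace_eq_play, h, List.getElem?_append_right hlen.le]
  simp [hlen]

theorem outcomeTrace_of_length_play (h : (play fi fo fd fr n).length = n) :
    outcomeTrace s fi fo fd fr n = chosenLabel fi fo fr (play fi fo fd fr n) := by
  rcases hc : chosenLabel fi fo fr (play fi fo fd fr n) with _ | ℓ
  · rw [outcomeTrace_eq_play, play_succ, gstep_eq_chosenLabel, hc]
    simp [h]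
  · obtain ⟨q, -, -, hstep⟩ := gstep_of_chosenLabel_eq_some (fd := fd) (isPath_play n) hc
    exact outcomeTrace_of_play_succ_eq_append h (by rw [play_succ, hstep])

theorem length_play_of_outcomeTrace_eq_some {ℓ : In ⊕ Out}
    (h : outcomeTrace s fi fo fd fr n = some ℓ) : (play fi fo fd fr n).length = n := by
  rcases play_succ_cases fi fo fd fr n with h' | ⟨hlen, -⟩
  · rw [outcomeTrace_eq_play, h', List.getElem?_eq_none (length_play_le n)] at h
    cases h
  · exact hlen

theorem chosenLabel_of_outcomeTrace_eq_some {ℓ : In ⊕ Out}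
    (h : outcomeTrace s fi fo fd fr n = some ℓ) :
    chosenLabel fi fo fr (play fi fo fd fr n) = some ℓ := by
  rwa [← outcomeTrace_of_length_play (length_play_of_outcomeTrace_eq_some h)]

theorem inStrat_eq_some_of_outcomeTrace_eq_inl {a : In}
    (h : outcomeTrace s fi fo fd fr n = some (.inl a)) : fi.f (play fi fo fd fr n) = some a :=
  inStrat_eq_some_of_chosenLabel (chosenLabel_of_outcomeTrace_eq_some h)

theorem outcomeTrace_length_play (n : ℕ) :
    outcomeTrace s fi fo fd fr (play fi fo fd fr n).length =
      chosenLabel fi fo fr (play fi fo fd fr n) := by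
  conv_rhs => rw [← play_length_play n]
  exact outcomeTrace_of_length_play (by rw [play_length_play])

theorem map_fst_play (n : ℕ) :
    (play fi fo fd fr n).map Prod.fst =
      (List.range n).filterMap (outcomeTrace s fi fo fd fr) := by
  induction n with
  | zero => rfl
  | succ n ih =>
    rw [List.range_succ, List.filterMap_append, ← ih]
    rcases play_succ_cases fi fo fd fr n with h | ⟨hlen, e, h⟩
    · have hnone : outcomeTrace s fi fo fd fr n = none := by
        rw [outcomeTrace_eq_play, h, List.getElem?_eq_none (length_play_le n)]
        rfl
      simp [h, hnone]
    · simp [h, outcomeTrace_of_play_succ_eq_append hlen h]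

end Play

section TwoGames

variable {s₁ : IA In Out State1} {s₂ : IA In Out State2}
  {fi₁ : InStrat s₁} {fo₁ : OutStrat s₁} {fd₁ : DetStrat s₁} {fr₁ : RaceStrat In Out State1}
  {fi₂ : InStrat s₂} {fo₂ : OutStrat s₂} {fd₂ : DetStrat s₂} {fr₂ : RaceStrat In Out State2}

theorem map_fst_play_eq_of_outcomeTrace_eq
    (h : ∀ n, outcomeTrace s₁ fi₁ fo₁ fd₁ fr₁ n = outcomeTrace s₂ fi₂ fo₂ fd₂ fr₂ n) (n : ℕ) :
    (play fi₁ fo₁ fd₁ fr₁ n).map Prod.fst = (play fi₂ fo₂ fd₂ fr₂ n).map Prod.fst := by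
  rw [map_fst_play, map_fst_play, funext h]

theorem outcomeTrace_eq_inl_of_outStrat_eq_none
    (h : ∀ n, outcomeTrace s₁ fi₁ fo₁ fd₁ fr₁ n = outcomeTrace s₂ fi₂ fo₂ fd₂ fr₂ n) {k : ℕ}
    (hlen : (play fi₁ fo₁ fd₁ fr₁ k).length = k) (hfo : fo₁.f (play fi₁ fo₁ fd₁ fr₁ k) = none)
    {b : In} (hfi : fi₂.f (play fi₂ fo₂ fd₂ fr₂ k) = some b) :
    outcomeTrace s₁ fi₁ fo₁ fd₁ fr₁ k = some (.inl b) := by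
  have hlen₂ : (play fi₂ fo₂ fd₂ fr₂ k).length = k := by
    rw [← List.length_map (f := Prod.fst), ← map_fst_play_eq_of_outcomeTrace_eq h,
      List.length_map, hlen]
  have heq := h k
  rw [outcomeTrace_of_length_play hlen, outcomeTrace_of_length_play hlen₂,
    chosenLabel_of_outStrat_eq_none hfo] at heq
  rw [outcomeTrace_of_length_play hlen, chosenLabel_of_outStrat_eq_none hfo, heq]
  rcases chosenLabel_of_inStrat_eq_some (fo := fo₂) (fr := fr₂) hfi with hc | ⟨x, hc⟩
  · exact hc
  · rw [hc] at heq
    simp at heq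

end TwoGames

section Follow

variable (ρ : Path In Out State) (hρ : IsPath s ρ)

open Classical in
noncomputable def followOut : OutStrat s where
  f π := if π <+: ρ then (ρ[π.length]?).bind fun p => p.1.getRight? else none
  valid π x _ h := by
    split_ifs at h with hpre
    obtain ⟨⟨ℓ, q⟩, hp, hx⟩ := Option.bind_eq_some_iff.1 h
    rw [Sum.getRight?_eq_some_iff] at hx
    subst hx
    exact ⟨q, hρ.tr_lastState_of_prefix hpre hp⟩

open Classical in
noncomputable def followDet : DetStrat s where
  f π ℓ :=
    if π <+: ρ ∧ (ρ[π.length]?).map Prod.fst = some ℓ then (ρ[π.length]?).map Prod.snd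
    else if h : ∃ q, s.tr (lastState s π) ℓ q then some h.choose else none
  total π ℓ _ hen := by
    split_ifs with h
    · obtain ⟨p, hp, -⟩ := Option.map_eq_some_iff.1 h.2
      simp [hp]
    · rfl
  valid π ℓ q _ h := by
    split_ifs at h with hfollow hen
    · obtain ⟨hpre, hℓ⟩ := hfollow
      obtain ⟨p, hp, rfl⟩ := Option.map_eq_some_iff.1 h
      rw [hp, Option.map_some, Option.some_inj] at hℓ
      subst hℓ
      exact hρ.tr_lastState_of_prefix hpre hp
    · cases h
      exact hen.choose_spec

variable {ρ}

theorem followOut_take {k : ℕ} (hk : k ≤ ρ.length) :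
    (followOut ρ hρ).f (ρ.take k) = (ρ[k]?).bind fun p => p.1.getRight? := by
  simp [followOut, List.take_prefix, hk]

theorem followDet_take {k : ℕ} (hk : k < ρ.length) :
    (followDet ρ hρ).f (ρ.take k) ρ[k].1 = some ρ[k].2 := by
  simp [followDet, List.take_prefix, hk.le, hk]

end Follow

section FollowGame

variable {s₁ : IA In Out State1} {s₂ : IA In Out State2} {ρ : Path In Out State1}
  {hρ : IsPath s₁ ρ} {fi₁ : InStrat s₁} {fi₂ : InStrat s₂} {fo₂ : OutStrat s₂}
  {fd₂ : DetStrat s₂} {fr₂ : RaceStrat In Out State2}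

theorem outcomeTrace_followOut_eq_inl
    (heq : ∀ n, outcomeTrace s₁ fi₁ (followOut ρ hρ) (followDet ρ hρ) (fun _ => true) n =
      outcomeTrace s₂ fi₂ fo₂ fd₂ fr₂ n)
    (htb : TraceBased s₂ fi₂) {k : ℕ} (hk : k ≤ ρ.length)
    (hP : play fi₁ (followOut ρ hρ) (followDet ρ hρ) (fun _ => true) k = ρ.take k)
    (hfo : (followOut ρ hρ).f (ρ.take k) = none) {π : Path In Out State2} (hπ : IsPath s₂ π)
    (htrace : π.map Prod.fst = (ρ.take k).map Prod.fst) {b : In} (hb : fi₂.f π = some b) :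
    outcomeTrace s₁ fi₁ (followOut ρ hρ) (followDet ρ hρ) (fun _ => true) k =
      some (.inl b) := by
  refine outcomeTrace_eq_inl_of_outStrat_eq_none heq (by simp [hP, hk]) (hP ▸ hfo) ?_
  have htrace₂ : (play fi₂ fo₂ fd₂ fr₂ k).map Prod.fst = π.map Prod.fst := by
    rw [← map_fst_play_eq_of_outcomeTrace_eq heq, hP, htrace]
  rwa [htb _ π (isPath_play k) hπ htrace₂]

theorem play_followOut_eq_take
    (heq : ∀ n, outcomeTrace s₁ fi₁ (followOut ρ hρ) (followDet ρ hρ) (fun _ => true) n =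
      outcomeTrace s₂ fi₂ fo₂ fd₂ fr₂ n)
    (htb : TraceBased s₂ fi₂)
    (hin : ∀ k (hk : k < ρ.length) b, ρ[k].1 = .inl b → ∃ π, IsPath s₂ π ∧
      π.map Prod.fst = (ρ.take k).map Prod.fst ∧ fi₂.f π = some b) :
    ∀ k ≤ ρ.length,
      play fi₁ (followOut ρ hρ) (followDet ρ hρ) (fun _ => true) k = ρ.take k := by
  intro k
  induction k with
  | zero => intro _; rfl
  | succ k ih =>
    intro hk
    have hP := ih (by omega)
    have hfo : (followOut ρ hρ).f (ρ.take k) = ρ[k].1.getRight? := by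
      rw [followOut_take hρ (by omega), List.getElem?_eq_getElem hk, Option.bind_some]
    have hout : outcomeTrace s₁ fi₁ (followOut ρ hρ) (followDet ρ hρ) (fun _ => true) k =
        some ρ[k].1 := by
      rcases hℓ : ρ[k].1 with b | x
      · obtain ⟨π, hπ, htrace, hb⟩ := hin k hk b hℓ
        exact outcomeTrace_followOut_eq_inl heq htb (by omega) hP (by rw [hfo, hℓ]; rfl) hπ
          htrace hb
      · rw [outcomeTrace_of_length_play (by rw [hP, List.length_take]; omega), hP]
        exact chosenLabel_of_race (by rw [hfo, hℓ]; rfl) rfl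
    obtain ⟨q, -, hfd, hstep⟩ := gstep_of_chosenLabel_eq_some (isPath_play k)
      (chosenLabel_of_outcomeTrace_eq_some hout)
    rw [hP, followDet_take hρ hk, Option.some_inj] at hfd
    rw [play_succ, hstep, hP, ← hfd, List.take_add_one, List.getElem?_eq_getElem hk]
    rfl

end FollowGame

theorem refATC.mem_inSet_after_of_outcomeTrace {s₁ : IA In Out State1} {s₂ : IA In Out State2}
    (h : s₁.refATC s₂) {fi : InStrat s₂} (htb : TraceBased s₂ fi) {fo : OutStrat s₂}
    {fd : DetStrat s₂} {fr : RaceStrat In Out State2} {n : ℕ} {a : In}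
    (hout : outcomeTrace s₂ fi fo fd fr n = some (.inl a)) :
    a ∈ s₁.inSet (s₁.after ((play fi fo fd fr n).map Prod.fst)) := by
  intro q hq
  obtain ⟨ρ, hρ, hρσ, rfl⟩ := exists_isPath_of_mem_after hq
  have hρlen : ρ.length = n := by
    rw [← List.length_map (f := Prod.fst), hρσ, List.length_map,
      length_play_of_outcomeTrace_eq_some hout]
  have htrace : ∀ k ≤ n, (play fi fo fd fr k).map Prod.fst = (ρ.take k).map Prod.fst := by
    intro k hk
    rw [play_eq_take hk, List.map_take, List.map_take, hρσ]
  obtain ⟨fo₂, fd₂, fr₂, hatc⟩ := h (followOut ρ hρ) (followDet ρ hρ) (fun _ => true)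
  obtain ⟨fi₁, heq⟩ := hatc fi
  have hin : ∀ k (hk : k < ρ.length) b, ρ[k].1 = .inl b → ∃ π, IsPath s₂ π ∧
      π.map Prod.fst = (ρ.take k).map Prod.fst ∧ fi.f π = some b := by
    intro k hk b hb
    have hout_k : outcomeTrace s₂ fi fo fd fr k = some (.inl b) := by
      rw [outcomeTrace_eq_getElem?_play (by omega : k < n), ← List.getElem?_map, ← hρσ,
        List.getElem?_map, List.getElem?_eq_getElem hk, Option.map_some, hb]
    exact ⟨_, isPath_play k, htrace k (by omega),
      inStrat_eq_some_of_outcomeTrace_eq_inl hout_k⟩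
  have hP := play_followOut_eq_take heq htb hin n hρlen.ge
  have hout₁ := outcomeTrace_followOut_eq_inl heq htb hρlen.ge hP
    (by rw [followOut_take hρ hρlen.ge, List.getElem?_eq_none hρlen.le]; rfl)
    (isPath_play n) (htrace n le_rfl) (inStrat_eq_some_of_outcomeTrace_eq_inl hout)
  obtain ⟨q', htr⟩ := exists_tr_of_chosenLabel (isPath_play n)
    (chosenLabel_of_outcomeTrace_eq_some hout₁)
  rw [hP, ← hρlen, List.take_length] at htr
  exact ⟨q', htr⟩

section Replay

variable {fi : InStrat s} {fo : OutStrat s} {fd : DetStrat s} {fr : RaceStrat In Out State}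

variable (s) in
def ValidTraceInput (g : List (In ⊕ Out) → Option In) : Prop :=
  ∀ π a, IsPath s π → g (π.map Prod.fst) = some a → ∃ q, s.tr (lastState s π) (.inl a) q

def InStrat.ofTrace (g : List (In ⊕ Out) → Option In) (hg : ValidTraceInput s g) : InStrat s :=
  ⟨fun π => g (π.map Prod.fst), hg⟩

theorem InStrat.traceBased_ofTrace (g : List (In ⊕ Out) → Option In)
    (hg : ValidTraceInput s g) : TraceBased s (InStrat.ofTrace g hg) :=
  fun _ _ _ _ h => congrArg g h

open Classical in
noncomputable def replayInput (fi : InStrat s) (fo : OutStrat s) (fd : DetStrat s)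
    (fr : RaceStrat In Out State) (σ : List (In ⊕ Out)) : Option In :=
  if σ = (play fi fo fd fr σ.length).map Prod.fst then
    (outcomeTrace s fi fo fd fr σ.length).bind Sum.getLeft?
  else none

theorem replayInput_map_fst_play (n : ℕ) :
    replayInput fi fo fd fr ((play fi fo fd fr n).map Prod.fst) =
      (chosenLabel fi fo fr (play fi fo fd fr n)).bind Sum.getLeft? := by
  rw [replayInput, List.length_map, play_length_play, if_pos rfl, outcomeTrace_length_play]

theorem play_ofTrace_replayInput {hg : ValidTraceInput s (replayInput fi fo fd fr)} (n : ℕ) :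
    play (InStrat.ofTrace (replayInput fi fo fd fr) hg) fo fd fr n = play fi fo fd fr n := by
  induction n with
  | zero => rfl
  | succ n ih =>
    rw [play_succ, play_succ, ih, gstep_eq_chosenLabel, gstep_eq_chosenLabel,
      chosenLabel_congr_inStrat (replayInput_map_fst_play n)]

theorem refATC.validTraceInput_replayInput {s₁ : IA In Out State1} {s₂ : IA In Out State2}
    (h : s₁.refATC s₂) {fi₁ : InStrat s₁} {fo₁ : OutStrat s₁} {fd₁ : DetStrat s₁}
    {fr₁ : RaceStrat In Out State1} {fi₂ : InStrat s₂} (htb : TraceBased s₂ fi₂)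
    {fo₂ : OutStrat s₂} {fd₂ : DetStrat s₂} {fr₂ : RaceStrat In Out State2}
    (heq : ∀ n, outcomeTrace s₁ fi₁ fo₁ fd₁ fr₁ n = outcomeTrace s₂ fi₂ fo₂ fd₂ fr₂ n) :
    ValidTraceInput s₁ (replayInput fi₁ fo₁ fd₁ fr₁) := by
  intro π a hπ ha
  unfold replayInput at ha
  split_ifs at ha with htrace
  obtain ⟨ℓ, hℓ, hℓa⟩ := Option.bind_eq_some_iff.1 ha
  rw [Sum.getLeft?_eq_some_iff] at hℓa
  subst hℓa
  have hmem := h.mem_inSet_after_of_outcomeTrace htb ((heq _).symm.trans hℓ)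
  rw [← map_fst_play_eq_of_outcomeTrace_eq heq, ← htrace] at hmem
  exact hmem _ hπ.lastState_mem_after

end Replay

end IA

open IA in
theorem stmt16 (In Out State1 State2 : Type)
    (s1 : IA In Out State1) (s2 : IA In Out State2)
    (h : s1.refATC s2) : s1.refAAEEtb s2 := by
  intro fi₂ htb fo₁ fd₁ fr₁
  obtain ⟨fo₂, fd₂, fr₂, hatc⟩ := h fo₁ fd₁ fr₁
  obtain ⟨fi₁, heq⟩ := hatc fi₂
  have hvalid := h.validTraceInput_replayInput htb heq
  refine ⟨InStrat.ofTrace _ hvalid, InStrat.traceBased_ofTrace _ hvalid, fo₂, fd₂, fr₂, fun n => ?_⟩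
  rw [outcomeTrace_eq_play, play_ofTrace_replayInput, ← outcomeTrace_eq_play]
  exact heq n
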